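/- If R and S are injective partial functional relations on X, then the injective union R ⊔¹ S := (R ⊔ S) ∩ ((R⁻¹ ⊔ S⁻¹))⁻¹ is an injective partial functional relation on X, where ⊔ denotes preferential union and ⁻¹ denotes relational converse. -/

import Mathlib

def IsPFun {α : Type*} (R : Set (α × α)) : Prop :=
  ∀ x y z : α, (x, y) ∈ R → (x, z) ∈ R → y = z

def relComp {α : Type*} (R S : Set (α × α)) : Set (α × α) :=
  {p | ∃ y, (p.1, y) ∈ R ∧ (y, p.2) ∈ S}

def antidom {α : Type*} (R : Set (α × α)) : Set (α × α) :=
  {p | p.1 = p.2 ∧ ¬ ∃ y, (p.1, y) ∈ R}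

def prefUnion {α : Type*} (R S : Set (α × α)) : Set (α × α) :=
  R ∪ {p | p ∈ S ∧ ¬ ∃ z, (p.1, z) ∈ R}

def conv {α : Type*} (R : Set (α × α)) : Set (α × α) :=
  {p | (p.2, p.1) ∈ R}

def injUnion {α : Type*} (R S : Set (α × α)) : Set (α × α) :=
  prefUnion R S ∩ conv (prefUnion (conv R) (conv S))

/-! The preferential union of two partial functions is a partial function, since on the domain of
`R` only `R` contributes. The injective union is contained in `R ⊔ S`, and its converse in
`R⁻¹ ⊔ S⁻¹`, so both are partial functions. -/

section

variable {α : Type*}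

theorem IsPFun.mono {R S : Set (α × α)} (hR : IsPFun R) (hSR : S ⊆ R) : IsPFun S :=
  fun x y z hy hz => hR x y z (hSR hy) (hSR hz)

theorem IsPFun.prefUnion {R S : Set (α × α)} (hR : IsPFun R) (hS : IsPFun S) :
    IsPFun (prefUnion R S) := by
  intro x y z hy hz
  rcases hy with hy | ⟨hy, hxR⟩ <;> rcases hz with hz | ⟨hz, hxR'⟩
  · exact hR x y z hy hz
  · exact absurd ⟨y, hy⟩ hxR'
  · exact absurd ⟨z, hz⟩ hxR
  · exact hS x y z hy hz

theorem injUnion_subset_prefUnion (R S : Set (α × α)) : injUnion R S ⊆ prefUnion R S :=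
  fun _ hp => hp.1

theorem conv_injUnion_subset_prefUnion_conv (R S : Set (α × α)) :
    conv (injUnion R S) ⊆ prefUnion (conv R) (conv S) :=
  fun _ hp => hp.2

end

theorem stmt6 {α : Type*} (R S : Set (α × α))
    (hR : IsPFun R) (hR' : IsPFun (conv R)) (hS : IsPFun S) (hS' : IsPFun (conv S)) :
    IsPFun (injUnion R S) ∧ IsPFun (conv (injUnion R S)) :=
  ⟨(hR.prefUnion hS).mono (injUnion_subset_prefUnion R S),
    (hR'.prefUnion hS').mono (conv_injUnion_subset_prefUnion_conv R S)⟩
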